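/- Let X ∈ M_m(ℝ) ⊗ M_n(ℝ) satisfy X = Xᵀ and X^Γ = X. Then the minimum (resp. maximum) of (v ⊗ w)* X (v ⊗ w) over complex unit vectors v ∈ ℂ^m, w ∈ ℂ^n equals the minimum (resp. maximum) over real unit vectors v ∈ ℝ^m, w ∈ ℝ^n. -/

import Mathlib

open Matrix Complex

noncomputable section

def vKron {α β : Type*} (v : α → ℝ) (w : β → ℝ) : α × β → ℝ := fun p => v p.1 * w p.2

def cKron {α β : Type*} (v : α → ℂ) (w : β → ℂ) : α × β → ℂ := fun p => v p.1 * w p.2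

/-- Partial transpose on the second tensor factor. -/
def pt {α β : Type*} (B : Matrix (α × β) (α × β) ℝ) : Matrix (α × β) (α × β) ℝ :=
  Matrix.of fun p q => B (p.1, q.2) (q.1, p.2)

/-- Values of the quadratic form of `B` on real unit product vectors. -/
def prodSet {α β : Type*} [Fintype α] [Fintype β] (B : Matrix (α × β) (α × β) ℝ) : Set ℝ :=
  {r | ∃ (v : α → ℝ) (w : β → ℝ), v ⬝ᵥ v = 1 ∧ w ⬝ᵥ w = 1 ∧
    r = vKron v w ⬝ᵥ B.mulVec (vKron v w)}

/-- The numerical range of a complex matrix. -/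
def numRange {N : Type*} [Fintype N] (A : Matrix N N ℂ) : Set ℂ :=
  {z | ∃ x : N → ℂ, star x ⬝ᵥ x = 1 ∧ z = star x ⬝ᵥ A.mulVec x}

/-- `W^{1+i}(B) = {c ∈ ℝ : c(1+i) ∈ W(B + iB^Γ)}`. -/
def W1i {α β : Type*} [Fintype α] [Fintype β] (B : Matrix (α × β) (α × β) ℝ) : Set ℝ :=
  {c | (c : ℂ) * (1 + Complex.I) ∈
    numRange (B.map (fun t => (t : ℂ)) + Complex.I • (pt B).map (fun t => (t : ℂ)))}

/-- Values of the quadratic form on complex unit product vectors (which are real here). -/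
def prodSetC {m n : ℕ} (X : Matrix (Fin m × Fin n) (Fin m × Fin n) ℝ) : Set ℝ :=
  {r | ∃ (v : Fin m → ℂ) (w : Fin n → ℂ), star v ⬝ᵥ v = 1 ∧ star w ⬝ᵥ w = 1 ∧
    (r : ℂ) = star (cKron v w) ⬝ᵥ (X.map (fun t => (t : ℂ))).mulVec (cKron v w)}

/-!
Because `X = Xᵀ = X^Γ`, the value of the quadratic form at `v ⊗ w` only sees
`Re(v v*) ⊗ Re(w w*)`; writing `v = a + ib` and `w = c + id`, it is the sum of the real values at
`a ⊗ c`, `a ⊗ d`, `b ⊗ c` and `b ⊗ d`. Each of these is `|a|²|c|²`, … times the value at the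
normalized real product vector, and the weights sum to `|v|²|w|² = 1`. So the complex values
contain the real ones and lie in their convex hull, hence both sets have the same extrema.
-/

open Finset

section OrderLemmas

variable {γ : Type*} [PartialOrder γ] {S T : Set γ} {μ : γ}

lemma isLeast_iff_of_forall_exists_le (hST : S ⊆ T) (hT : ∀ x ∈ T, ∃ s ∈ S, s ≤ x) :
    IsLeast T μ ↔ IsLeast S μ := by
  refine ⟨fun ⟨hμ, hlb⟩ => ?_, fun ⟨hμ, hlb⟩ => ⟨hST hμ, fun x hx => ?_⟩⟩
  · obtain ⟨s, hs, hsμ⟩ := hT μ hμ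
    exact ⟨le_antisymm hsμ (hlb (hST hs)) ▸ hs, fun x hx => hlb (hST hx)⟩
  · obtain ⟨s, hs, hsx⟩ := hT x hx
    exact (hlb hs).trans hsx

lemma isGreatest_iff_of_forall_exists_ge (hST : S ⊆ T) (hT : ∀ x ∈ T, ∃ s ∈ S, x ≤ s) :
    IsGreatest T μ ↔ IsGreatest S μ :=
  isLeast_iff_of_forall_exists_le (γ := γᵒᵈ) hST hT

end OrderLemmas

lemma dotProduct_mulVec_eq_sum {R ι : Type*} [CommSemiring R] [Fintype ι]
    (M : Matrix ι ι R) (x y : ι → R) :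
    x ⬝ᵥ M *ᵥ y = ∑ z : ι × ι, x z.1 * M z.1 z.2 * y z.2 := by
  simp only [dotProduct, mulVec, mul_sum, Fintype.sum_prod_type, mul_assoc]

lemma smul_dotProduct_mulVec_smul {R ι : Type*} [CommSemiring R] [Fintype ι]
    (M : Matrix ι ι R) (k : R) (x : ι → R) :
    (k • x) ⬝ᵥ M *ᵥ (k • x) = k ^ 2 * (x ⬝ᵥ M *ᵥ x) := by
  rw [mulVec_smul, smul_dotProduct, dotProduct_smul, smul_eq_mul, smul_eq_mul]
  ring

section RealVectors

variable {ι : Type*} [Fintype ι]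

lemma dotProduct_self_nonneg (a : ι → ℝ) : 0 ≤ a ⬝ᵥ a :=
  Fintype.sum_nonneg fun i => mul_self_nonneg (a i)

def normalizeVec (a : ι → ℝ) : ι → ℝ := (√(a ⬝ᵥ a))⁻¹ • a

lemma normalizeVec_dotProduct_self {a : ι → ℝ} (ha : a ⬝ᵥ a ≠ 0) :
    normalizeVec a ⬝ᵥ normalizeVec a = 1 := by
  have hpos : 0 < a ⬝ᵥ a := (dotProduct_self_nonneg a).lt_of_ne' ha
  rw [normalizeVec, smul_dotProduct, dotProduct_smul, smul_eq_mul, smul_eq_mul, ← mul_assoc,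
    ← mul_inv, Real.mul_self_sqrt hpos.le, inv_mul_cancel₀ ha]

lemma sqrt_smul_normalizeVec (a : ι → ℝ) : √(a ⬝ᵥ a) • normalizeVec a = a := by
  by_cases ha : a ⬝ᵥ a = 0
  · simp [dotProduct_self_eq_zero.mp ha]
  · have hsqrt : √(a ⬝ᵥ a) ≠ 0 :=
      Real.sqrt_ne_zero'.mpr ((dotProduct_self_nonneg a).lt_of_ne' ha)
    rw [normalizeVec, smul_smul, mul_inv_cancel₀ hsqrt, one_smul]

end RealVectors

section ReIm

variable {ι : Type*}

def reIm (v : ι → ℂ) : Fin 2 → ι → ℝ := ![fun i => (v i).re, fun i => (v i).im]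

lemma re_star_mul_eq_sum_reIm (v : ι → ℂ) (i k : ι) :
    (star (v i) * v k).re = ∑ s, reIm v s i * reIm v s k := by
  simp [reIm, Fin.sum_univ_two]

lemma sum_reIm_dotProduct_self [Fintype ι] (v : ι → ℂ) :
    ∑ s, reIm v s ⬝ᵥ reIm v s = (star v ⬝ᵥ v).re := by
  simp only [dotProduct, re_sum, Pi.star_apply, re_star_mul_eq_sum_reIm]
  exact sum_comm

end ReIm

lemma vKron_smul_smul {α β : Type*} (t s : ℝ) (a : α → ℝ) (c : β → ℝ) :
    vKron (t • a) (s • c) = (t * s) • vKron a c := by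
  ext p
  simp only [vKron, Pi.smul_apply, smul_eq_mul]
  ring

def ptSwap (α β : Type*) : (α × β) × (α × β) ≃ (α × β) × (α × β) where
  toFun z := ((z.1.1, z.2.2), (z.2.1, z.1.2))
  invFun z := ((z.1.1, z.2.2), (z.2.1, z.1.2))
  left_inv _ := rfl
  right_inv _ := rfl

section ProductVectors

variable {α β : Type*} [Fintype α] [Fintype β]

/-- The paper's identity `x*Xx = Tr(X (Re(vv*) ⊗ Re(ww*)))`, for general Hermitian `A` and `B`. -/
lemma sum_mul_kronecker_eq_re {X : Matrix (α × β) (α × β) ℝ} (h1 : X.IsSymm) (h2 : pt X = X)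
    {A : Matrix α α ℂ} {B : Matrix β β ℂ} (hA : A.IsHermitian) (hB : B.IsHermitian) :
    ∑ z : (α × β) × (α × β), (X z.1 z.2 : ℂ) * (A z.1.1 z.2.1 * B z.1.2 z.2.2) =
      ((∑ z : (α × β) × (α × β), X z.1 z.2 * ((A z.1.1 z.2.1).re * (B z.1.2 z.2.2).re) : ℝ) :
        ℂ) := by
  set T : (α × β) × (α × β) → ℂ := fun z => X z.1 z.2 * (A z.1.1 z.2.1 * B z.1.2 z.2.2)
  set σ := ptSwap α β
  set τ := Equiv.prodComm (α × β) (α × β)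
  -- `X` is invariant under `σ` and `τ`, which conjugate `B`, resp. both `A` and `B`; averaging
  -- over the four symmetries replaces `A` and `B` by their real parts.
  have hterm : ∀ z, T z + T (σ z) + T (τ z) + T (σ (τ z)) =
      4 * ((X z.1 z.2 * ((A z.1.1 z.2.1).re * (B z.1.2 z.2.2).re) : ℝ) : ℂ) := by
    rintro ⟨⟨i, j⟩, ⟨k, l⟩⟩
    have hXσ : X (i, l) (k, j) = X (i, j) (k, l) := congrFun (congrFun h2 (i, j)) (k, l)
    have hXτ : X (k, l) (i, j) = X (i, j) (k, l) := h1.apply _ _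
    have hXστ : X (k, j) (i, l) = X (i, j) (k, l) :=
      (congrFun (congrFun h2 (k, l)) (i, j)).trans hXτ
    simp only [T, σ, τ, ptSwap, Equiv.coe_fn_mk, Equiv.prodComm_apply, Prod.swap_prod_mk,
      hXσ, hXτ, hXστ, ← hA.apply k i, ← hB.apply l j, RCLike.star_def]
    push_cast
    rw [re_eq_add_conj, re_eq_add_conj]
    ring
  have h4 : 4 * ∑ z, T z = ∑ z, (T z + T (σ z) + T (τ z) + T (σ (τ z))) := by
    rw [sum_add_distrib, sum_add_distrib, sum_add_distrib, Equiv.sum_comp τ (fun z => T (σ z)),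
      Equiv.sum_comp σ T, Equiv.sum_comp τ T]
    ring
  simp_rw [hterm, ← mul_sum] at h4
  rw [ofReal_sum]
  exact mul_left_cancel₀ (by norm_num : (4 : ℂ) ≠ 0) h4

open scoped ComplexOrder in
lemma quadForm_cKron_eq_sum_reIm {X : Matrix (α × β) (α × β) ℝ} (h1 : X.IsSymm)
    (h2 : pt X = X) (v : α → ℂ) (w : β → ℂ) :
    star (cKron v w) ⬝ᵥ X.map (fun t => (t : ℂ)) *ᵥ cKron v w =
      ((∑ st : Fin 2 × Fin 2, vKron (reIm v st.1) (reIm w st.2) ⬝ᵥ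
        X *ᵥ vKron (reIm v st.1) (reIm w st.2) : ℝ) : ℂ) := by
  have hA := (posSemidef_vecMulVec_star_self v).isHermitian
  have hB := (posSemidef_vecMulVec_star_self w).isHermitian
  calc star (cKron v w) ⬝ᵥ X.map (fun t => (t : ℂ)) *ᵥ cKron v w
      = ∑ z : (α × β) × (α × β), (X z.1 z.2 : ℂ) *
          (vecMulVec (star v) v z.1.1 z.2.1 * vecMulVec (star w) w z.1.2 z.2.2) := by
        rw [dotProduct_mulVec_eq_sum]
        refine sum_congr rfl fun z _ => ?_
        simp only [cKron, vecMulVec_apply, map_apply, Pi.star_apply, star_mul']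
        ring
    _ = _ := by
        rw [sum_mul_kronecker_eq_re h1 h2 hA hB]
        congr 1
        simp only [vecMulVec_apply, Pi.star_apply, re_star_mul_eq_sum_reIm,
          dotProduct_mulVec_eq_sum, vKron]
        rw [sum_comm]
        refine sum_congr rfl fun z _ => ?_
        simp only [Fintype.sum_prod_type, Fin.sum_univ_two]
        ring

lemma quadForm_vKron_eq_mul_normalizeVec (X : Matrix (α × β) (α × β) ℝ) (a : α → ℝ)
    (c : β → ℝ) :
    vKron a c ⬝ᵥ X *ᵥ vKron a c = (a ⬝ᵥ a) * (c ⬝ᵥ c) *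
      (vKron (normalizeVec a) (normalizeVec c) ⬝ᵥ
        X *ᵥ vKron (normalizeVec a) (normalizeVec c)) := by
  conv_lhs => rw [← sqrt_smul_normalizeVec a, ← sqrt_smul_normalizeVec c, vKron_smul_smul,
    smul_dotProduct_mulVec_smul]
  rw [mul_pow, Real.sq_sqrt (dotProduct_self_nonneg a), Real.sq_sqrt (dotProduct_self_nonneg c)]

lemma quadForm_vKron_normalizeVec_mem_prodSet (X : Matrix (α × β) (α × β) ℝ) {a : α → ℝ}
    {c : β → ℝ} (ha : a ⬝ᵥ a ≠ 0) (hc : c ⬝ᵥ c ≠ 0) :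
    vKron (normalizeVec a) (normalizeVec c) ⬝ᵥ X *ᵥ vKron (normalizeVec a) (normalizeVec c) ∈
      prodSet X :=
  ⟨normalizeVec a, normalizeVec c, normalizeVec_dotProduct_self ha,
    normalizeVec_dotProduct_self hc, rfl⟩

end ProductVectors

section FinProducts

variable {m n : ℕ}

lemma prodSet_subset_prodSetC (X : Matrix (Fin m × Fin n) (Fin m × Fin n) ℝ) :
    prodSet X ⊆ prodSetC X := by
  rintro r ⟨v, w, hv, hw, rfl⟩
  refine ⟨fun i => (v i : ℂ), fun j => (w j : ℂ), ?_, ?_, ?_⟩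
  · simp only [dotProduct, Pi.star_apply, RCLike.star_def, conj_ofReal]
    exact_mod_cast hv
  · simp only [dotProduct, Pi.star_apply, RCLike.star_def, conj_ofReal]
    exact_mod_cast hw
  · simp [dotProduct, mulVec, cKron, vKron]

lemma prodSetC_subset_convexHull_prodSet {X : Matrix (Fin m × Fin n) (Fin m × Fin n) ℝ}
    (h1 : X.IsSymm) (h2 : pt X = X) : prodSetC X ⊆ convexHull ℝ (prodSet X) := by
  rintro r ⟨v, w, hv, hw, hr⟩
  rw [quadForm_cKron_eq_sum_reIm h1 h2, ofReal_inj] at hr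
  let wt : Fin 2 × Fin 2 → ℝ := fun st =>
    (reIm v st.1 ⬝ᵥ reIm v st.1) * (reIm w st.2 ⬝ᵥ reIm w st.2)
  let z : Fin 2 × Fin 2 → ℝ := fun st =>
    vKron (normalizeVec (reIm v st.1)) (normalizeVec (reIm w st.2)) ⬝ᵥ
      X *ᵥ vKron (normalizeVec (reIm v st.1)) (normalizeVec (reIm w st.2))
  have hwt₀ : ∀ st, 0 ≤ wt st := fun st =>
    mul_nonneg (dotProduct_self_nonneg _) (dotProduct_self_nonneg _)
  have hwt : ∑ᶠ st, wt st = 1 := by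
    rw [finsum_eq_sum_of_fintype, Fintype.sum_prod_type]
    simp only [wt, ← mul_sum, ← sum_mul, sum_reIm_dotProduct_self, hv, hw, one_re, one_mul]
  have hz : ∀ st, wt st ≠ 0 → z st ∈ convexHull ℝ (prodSet X) := fun st hst =>
    subset_convexHull ℝ _ (quadForm_vKron_normalizeVec_mem_prodSet X
      (left_ne_zero_of_mul hst) (right_ne_zero_of_mul hst))
  have hmem := (convex_convexHull ℝ (prodSet X)).finsum_mem hwt₀ hwt hz
  rw [finsum_eq_sum_of_fintype] at hmem
  simp only [wt, z, smul_eq_mul, ← quadForm_vKron_eq_mul_normalizeVec] at hmem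
  rwa [hr]

end FinProducts

theorem stmt16 {m n : ℕ} (X : Matrix (Fin m × Fin n) (Fin m × Fin n) ℝ)
    (h1 : X.IsSymm) (h2 : pt X = X) (μ : ℝ) :
    (IsLeast (prodSetC X) μ ↔ IsLeast (prodSet X) μ) ∧
    (IsGreatest (prodSetC X) μ ↔ IsGreatest (prodSet X) μ) := by
  have hsub := prodSet_subset_prodSetC X
  have hhull := prodSetC_subset_convexHull_prodSet h1 h2
  exact ⟨isLeast_iff_of_forall_exists_le hsub fun x hx =>
      (concaveOn_id convex_univ).exists_le_of_mem_convexHull (Set.subset_univ _) (hhull hx),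
    isGreatest_iff_of_forall_exists_ge hsub fun x hx =>
      (convexOn_id convex_univ).exists_ge_of_mem_convexHull (Set.subset_univ _) (hhull hx)⟩
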